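/- If C₁ and C₂ are smooth functions with 𝒟_t C₁ = 𝒟_t C₂ = 0 for a nondegenerate Lagrangian system, then the associated symmetry vector fields satisfy X^ℰ_{(C₁)}(C₂) = −X^ℰ_{(C₂)}(C₁) = {C₂, C₁}, where X^ℰ_{(C)} = (g^{-1})^{ij}∂_{q̇^j}C ∂_{q^i} + 𝒟_t((g^{-1})^{ij}∂_{q̇^j}C) ∂_{q̇^i} and { , } is the Lagrangian Poisson bracket. -/

import Mathlib

open Matrix

/-- Functions of `(t, q, q̇)`. -/
abbrev Fn (N : ℕ) := ℝ → (Fin N → ℝ) → (Fin N → ℝ) → ℝ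

/-- Partial derivative in `t`. -/
noncomputable def pt {N : ℕ} (F : Fn N) : Fn N :=
  fun t q v => deriv (fun s => F s q v) t

/-- Partial derivative in `q^i`. -/
noncomputable def pq {N : ℕ} (i : Fin N) (F : Fn N) : Fn N :=
  fun t q v => deriv (fun s => F t (Function.update q i s) v) (q i)

/-- Partial derivative in `q̇^i`. -/
noncomputable def pv {N : ℕ} (i : Fin N) (F : Fn N) : Fn N :=
  fun t q v => deriv (fun s => F t q (Function.update v i s)) (v i)

/-- Smoothness of a function of `(t,q,q̇)`. -/
def SmoothFn {N : ℕ} (F : Fn N) : Prop :=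
  ContDiff ℝ (⊤ : ℕ∞) (fun p : ℝ × (Fin N → ℝ) × (Fin N → ℝ) => F p.1 p.2.1 p.2.2)

/-- Hessian matrix `g_{ij} = ∂²L/∂q̇^i∂q̇^j`. -/
noncomputable def gmat {N : ℕ} (L : Fn N) (t : ℝ) (q v : Fin N → ℝ) :
    Matrix (Fin N) (Fin N) ℝ :=
  Matrix.of fun i j => pv i (pv j L) t q v

/-- Matrix `h_{ij} = ∂²L/∂q^i∂q̇^j`. -/
noncomputable def hmat {N : ℕ} (L : Fn N) (t : ℝ) (q v : Fin N → ℝ) :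
    Matrix (Fin N) (Fin N) ℝ :=
  Matrix.of fun i j => pq i (pv j L) t q v

/-- `f^i = (g⁻¹)^{ij}(∂L/∂q^j − ∂²L/∂t∂q̇^j − q̇^k ∂²L/∂q^k∂q̇^j)`. -/
noncomputable def fvec {N : ℕ} (L : Fn N) (i : Fin N) : Fn N :=
  fun t q v => ∑ j, (gmat L t q v)⁻¹ i j *
    (pq j L t q v - pt (pv j L) t q v - ∑ k, v k * pq k (pv j L) t q v)

/-- Time derivative `𝒟_t = ∂_t + q̇^i∂_{q^i} + f^i∂_{q̇^i}` for a general rhs `f`. -/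
noncomputable def DtF {N : ℕ} (f : Fin N → Fn N) (C : Fn N) : Fn N :=
  fun t q v => pt C t q v + ∑ i, v i * pq i C t q v + ∑ i, f i t q v * pv i C t q v

/-- Time derivative restricted to the solution space of the Lagrangian system. -/
noncomputable def Dt {N : ℕ} (L : Fn N) (C : Fn N) : Fn N :=
  DtF (fvec L) C

/-- The matrix `c^{ij} = (g⁻¹)^{ik}(g⁻¹)^{jl}(h_{kl} − h_{lk})`. -/
noncomputable def cmat {N : ℕ} (L : Fn N) (t : ℝ) (q v : Fin N → ℝ) :
    Matrix (Fin N) (Fin N) ℝ :=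
  Matrix.of fun i j => ∑ k, ∑ l,
    (gmat L t q v)⁻¹ i k * (gmat L t q v)⁻¹ j l *
      (hmat L t q v k l - hmat L t q v l k)

/-- Lagrangian-variable Poisson bracket. -/
noncomputable def PB {N : ℕ} (L : Fn N) (F₁ F₂ : Fn N) : Fn N :=
  fun t q v =>
    (∑ i, ∑ j, (gmat L t q v)⁻¹ i j *
      (pq i F₁ t q v * pv j F₂ t q v - pq i F₂ t q v * pv j F₁ t q v))
    + ∑ i, ∑ j, cmat L t q v i j * pv i F₁ t q v * pv j F₂ t q v

/-- Noether characteristic `P^i = (g⁻¹)^{ij} ∂_{q̇^j} C`. -/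
noncomputable def Pchar {N : ℕ} (L C : Fn N) (i : Fin N) : Fn N :=
  fun t q v => ∑ j, (gmat L t q v)⁻¹ i j * pv j C t q v

/-- Action of the symmetry vector field `X^ℰ_{(C)} = P^i∂_{q^i} + (𝒟_t P^i)∂_{q̇^i}`. -/
noncomputable def Xact {N : ℕ} (L C F : Fn N) : Fn N :=
  fun t q v => (∑ i, Pchar L C i t q v * pq i F t q v)
    + ∑ i, Dt L (Pchar L C i) t q v * pv i F t q v


abbrev EE (N : ℕ) := ℝ × (Fin N → ℝ) × (Fin N → ℝ)

variable {N : ℕ}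

noncomputable def Dd {N : ℕ} (w : EE N) (F : EE N → ℝ) : EE N → ℝ :=
  fun p => fderiv ℝ F p w

def Sm {N : ℕ} (F : EE N → ℝ) : Prop := ContDiff ℝ (⊤ : ℕ∞) F

theorem Sm.D {F : EE N → ℝ} (hF : Sm F) (w : EE N) : Sm (Dd w F) :=
  (hF.fderiv_right (by simp)).clm_apply contDiff_const

theorem Sm.diff {F : EE N → ℝ} (hF : Sm F) (p : EE N) : DifferentiableAt ℝ F p :=
  (hF.differentiable (by simp)).differentiableAt

theorem Sm.add {F G : EE N → ℝ} (hF : Sm F) (hG : Sm G) : Sm (fun p => F p + G p) := ContDiff.add hF hG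
theorem Sm.mul {F G : EE N → ℝ} (hF : Sm F) (hG : Sm G) : Sm (fun p => F p * G p) := ContDiff.mul hF hG
theorem Sm.sub {F G : EE N → ℝ} (hF : Sm F) (hG : Sm G) : Sm (fun p => F p - G p) := ContDiff.sub hF hG
theorem Sm.sum {ι : Type*} {s : Finset ι} {F : ι → EE N → ℝ} (hF : ∀ i ∈ s, Sm (F i)) :
    Sm (fun p => ∑ i ∈ s, F i p) := ContDiff.sum hF

/-- the velocity coordinate as a continuous linear map -/
noncomputable def vcoord (N : ℕ) (k : Fin N) : EE N →L[ℝ] ℝ :=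
  (ContinuousLinearMap.proj k).comp ((ContinuousLinearMap.snd ℝ (Fin N → ℝ) (Fin N → ℝ)).comp
    (ContinuousLinearMap.snd ℝ ℝ ((Fin N → ℝ) × (Fin N → ℝ))))

theorem Sm.vc (k : Fin N) : Sm (fun p : EE N => p.2.2 k) := (vcoord N k).contDiff

theorem Dd_vc (w : EE N) (k : Fin N) : Dd w (fun p : EE N => p.2.2 k) = fun _ => w.2.2 k := by
  funext p
  have : (fun p : EE N => p.2.2 k) = vcoord N k := rfl
  rw [Dd, this, ContinuousLinearMap.fderiv]
  rfl

theorem Dd_const (w : EE N) (c : ℝ) : Dd w (fun _ : EE N => c) = fun _ => 0 := by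
  funext p; simp [Dd]

theorem Dd_add {F G : EE N → ℝ} (hF : Sm F) (hG : Sm G) (w : EE N) :
    Dd w (fun p => F p + G p) = fun p => Dd w F p + Dd w G p := by
  funext p; simp [Dd, fderiv_fun_add (hF.diff p) (hG.diff p)]

theorem Dd_sub {F G : EE N → ℝ} (hF : Sm F) (hG : Sm G) (w : EE N) :
    Dd w (fun p => F p - G p) = fun p => Dd w F p - Dd w G p := by
  funext p; simp [Dd, fderiv_fun_sub (hF.diff p) (hG.diff p)]

theorem Dd_mul {F G : EE N → ℝ} (hF : Sm F) (hG : Sm G) (w : EE N) :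
    Dd w (fun p => F p * G p) = fun p => Dd w F p * G p + F p * Dd w G p := by
  funext p
  simp [Dd, fderiv_fun_mul (hF.diff p) (hG.diff p)]
  ring

theorem Dd_sum {ι : Type*} {s : Finset ι} {F : ι → EE N → ℝ} (hF : ∀ i ∈ s, Sm (F i)) (w : EE N) :
    Dd w (fun p => ∑ i ∈ s, F i p) = fun p => ∑ i ∈ s, Dd w (F i) p := by
  funext p
  simp only [Dd]
  rw [fderiv_fun_sum (fun i hi => (hF i hi).diff p)]
  simp

theorem Dd_swap {F : EE N → ℝ} (hF : Sm F) (w w' : EE N) :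
    Dd w (Dd w' F) = Dd w' (Dd w F) := by
  funext p
  have hsym : IsSymmSndFDerivAt ℝ F p := hF.contDiffAt.isSymmSndFDerivAt (by rw [minSmoothness_of_isRCLikeNormedField]; exact WithTop.coe_le_coe.mpr (le_top : (2 : ℕ∞) ≤ ⊤))
  have hd : DifferentiableAt ℝ (fderiv ℝ F) p :=
    ((hF.fderiv_right (m := (⊤ : ℕ∞)) (by simp)).differentiable (by simp)).differentiableAt
  have key : ∀ a b : EE N, Dd a (Dd b F) p = fderiv ℝ (fderiv ℝ F) p a b := by
    intro a b
    have h2 : Dd b F = fun q => (fderiv ℝ F q) b := rfl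
    rw [Dd, h2, fderiv_clm_apply hd (differentiableAt_const b)]
    simp
  rw [key, key, hsym w w']

/-- directions -/
noncomputable def dirT (N : ℕ) : EE N := (1, 0, 0)
noncomputable def dirQ (N : ℕ) (i : Fin N) : EE N := (0, Pi.single i 1, 0)
noncomputable def dirV (N : ℕ) (i : Fin N) : EE N := (0, 0, Pi.single i 1)

variable {N : ℕ}

noncomputable def lineP (q : Fin N → ℝ) (i : Fin N) (s : ℝ) : Fin N → ℝ :=
  q + (s - q i) • (Pi.single i 1 : Fin N → ℝ)

theorem update_eq_line (q : Fin N → ℝ) (i : Fin N) (s : ℝ) :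
    Function.update q i s = lineP q i s := by
  unfold lineP
  funext j
  rcases eq_or_ne j i with rfl | hne
  · simp [Function.update_self]
  · simp [Function.update_of_ne hne, Pi.single_eq_of_ne hne]

theorem pt_bridge {F : Fn N} {F' : EE N → ℝ}
    (h : ∀ p : EE N, F p.1 p.2.1 p.2.2 = F' p) (hF' : Sm F') (p : EE N) :
    pt F p.1 p.2.1 p.2.2 = Dd (dirT N) F' p := by
  obtain ⟨t, q, v⟩ := p
  have hfun : (fun s => F s q v) = fun s => F' (s, q, v) := by
    funext s; exact h (s, q, v)
  have hγ : HasDerivAt (fun s : ℝ => ((s, q, v) : EE N)) (dirT N) t :=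
    (hasDerivAt_id t).prodMk (hasDerivAt_const t (q, v))
  have := (hF'.diff (t, q, v)).hasFDerivAt.comp_hasDerivAt t hγ
  rw [pt, hfun]
  exact this.deriv

theorem pq_bridge {F : Fn N} {F' : EE N → ℝ}
    (h : ∀ p : EE N, F p.1 p.2.1 p.2.2 = F' p) (hF' : Sm F') (i : Fin N) (p : EE N) :
    pq i F p.1 p.2.1 p.2.2 = Dd (dirQ N i) F' p := by
  obtain ⟨t, q, v⟩ := p
  have hfun : (fun s => F t (Function.update q i s) v)
      = fun s => F' (t, lineP q i s, v) := by
    funext s; rw [← update_eq_line]; exact h (t, _, v)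
  have hmid : HasDerivAt (fun s : ℝ => lineP q i s) ((Pi.single i 1 : Fin N → ℝ)) (q i) := by
    unfold lineP
    simpa using (((hasDerivAt_id (q i)).sub_const (q i)).smul_const
      (Pi.single i 1 : Fin N → ℝ)).const_add q
  have hγ : HasDerivAt (fun s : ℝ => ((t, lineP q i s, v) : EE N))
      (dirQ N i) (q i) :=
    (hasDerivAt_const (q i) t).prodMk (hmid.prodMk (hasDerivAt_const (q i) v))
  have hpt : ((t, lineP q i (q i), v) : EE N) = (t, q, v) := by simp [lineP]
  have hd := (hF'.diff (t, q, v)).hasFDerivAt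
  rw [← hpt] at hd
  have := hd.comp_hasDerivAt (q i) hγ
  rw [pq, hfun]
  rw [hpt] at this
  exact this.deriv

theorem pv_bridge {F : Fn N} {F' : EE N → ℝ}
    (h : ∀ p : EE N, F p.1 p.2.1 p.2.2 = F' p) (hF' : Sm F') (i : Fin N) (p : EE N) :
    pv i F p.1 p.2.1 p.2.2 = Dd (dirV N i) F' p := by
  obtain ⟨t, q, v⟩ := p
  have hfun : (fun s => F t q (Function.update v i s))
      = fun s => F' (t, q, lineP v i s) := by
    funext s; rw [← update_eq_line]; exact h (t, q, _)
  have hmid : HasDerivAt (fun s : ℝ => lineP v i s) ((Pi.single i 1 : Fin N → ℝ)) (v i) := by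
    unfold lineP
    simpa using (((hasDerivAt_id (v i)).sub_const (v i)).smul_const
      (Pi.single i 1 : Fin N → ℝ)).const_add v
  have hγ : HasDerivAt (fun s : ℝ => ((t, q, lineP v i s) : EE N))
      (dirV N i) (v i) :=
    (hasDerivAt_const (v i) t).prodMk ((hasDerivAt_const (v i) q).prodMk hmid)
  have hpt : ((t, q, lineP v i (v i)) : EE N) = (t, q, v) := by simp [lineP]
  have hd := (hF'.diff (t, q, v)).hasFDerivAt
  rw [← hpt] at hd
  have := hd.comp_hasDerivAt (v i) hγ
  rw [pv, hfun]
  rw [hpt] at this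
  exact this.deriv

theorem Sm_det {M : EE N → Matrix (Fin N) (Fin N) ℝ}
    (hM : ∀ i j, Sm (fun p => M p i j)) : Sm (fun p => (M p).det) := by
  have : (fun p => (M p).det)
      = fun p => ∑ σ : Equiv.Perm (Fin N), (Equiv.Perm.sign σ : ℤ) * ∏ i, M p (σ i) i := by
    funext p; rw [Matrix.det_apply']
  rw [this]
  apply ContDiff.sum
  intro σ _
  exact contDiff_const.mul (contDiff_prod fun i _ => hM (σ i) i)

theorem Sm_inv_entry {M : EE N → Matrix (Fin N) (Fin N) ℝ}
    (hM : ∀ i j, Sm (fun p => M p i j)) (hU : ∀ p, IsUnit (M p)) (i j : Fin N) :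
    Sm (fun p => (M p)⁻¹ i j) := by
  have hdet : ∀ p, (M p).det ≠ 0 := fun p =>
    ((Matrix.isUnit_iff_isUnit_det _).mp (hU p)).ne_zero
  have hadj : Sm (fun p => (M p).adjugate i j) := by
    have : (fun p => (M p).adjugate i j)
        = fun p => ((M p).updateRow j (Pi.single i 1)).det := by
      funext p; rw [Matrix.adjugate_apply]
    rw [this]
    apply Sm_det
    intro a b
    rcases eq_or_ne a j with rfl | hne
    · simp only [Matrix.updateRow_self]
      exact contDiff_const
    · simp only [Matrix.updateRow_apply, if_neg hne]
      exact hM a b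
  have : (fun p => (M p)⁻¹ i j) = fun p => ((M p).det)⁻¹ * (M p).adjugate i j := by
    funext p
    rw [Matrix.inv_def, Ring.inverse_eq_inv']
    simp [Matrix.smul_apply]
  rw [this]
  exact ((Sm_det hM).inv hdet).mul hadj

/-- second velocity Hessian in the E-world -/
noncomputable def gE (Lu : EE N → ℝ) (i j : Fin N) : EE N → ℝ :=
  Dd (dirV N i) (Dd (dirV N j) Lu)
noncomputable def hEf (Lu : EE N → ℝ) (i j : Fin N) : EE N → ℝ :=
  Dd (dirQ N i) (Dd (dirV N j) Lu)
noncomputable def gMp (Lu : EE N → ℝ) (p : EE N) : Matrix (Fin N) (Fin N) ℝ :=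
  Matrix.of fun i j => gE Lu i j p
noncomputable def GE (Lu : EE N → ℝ) (i j : Fin N) : EE N → ℝ :=
  fun p => (gMp Lu p)⁻¹ i j
noncomputable def wE (Lu : EE N → ℝ) (m : Fin N) : EE N → ℝ :=
  fun p => Dd (dirQ N m) Lu p - Dd (dirT N) (Dd (dirV N m) Lu) p
    - ∑ k, p.2.2 k * hEf Lu k m p
noncomputable def fE (Lu : EE N → ℝ) (l : Fin N) : EE N → ℝ :=
  fun p => ∑ m, GE Lu l m p * wE Lu m p
noncomputable def DtE (Lu : EE N → ℝ) (F : EE N → ℝ) : EE N → ℝ :=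
  fun p => Dd (dirT N) F p + (∑ k, p.2.2 k * Dd (dirQ N k) F p)
    + ∑ k, fE Lu k p * Dd (dirV N k) F p
noncomputable def PE (Lu Cu : EE N → ℝ) (i : Fin N) : EE N → ℝ :=
  fun p => ∑ j, GE Lu i j p * Dd (dirV N j) Cu p

section Smooth
variable {Lu : EE N → ℝ}

theorem Sm_gE (hLu : Sm Lu) (i j : Fin N) : Sm (gE Lu i j) := (hLu.D _).D _
theorem Sm_hEf (hLu : Sm Lu) (i j : Fin N) : Sm (hEf Lu i j) := (hLu.D _).D _
theorem Sm_GE (hLu : Sm Lu) (hU : ∀ p : EE N, IsUnit (gMp Lu p)) (i j : Fin N) : Sm (GE Lu i j) :=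
  Sm_inv_entry (fun i j => Sm_gE hLu i j) hU i j
theorem Sm_wE (hLu : Sm Lu) (m : Fin N) : Sm (wE Lu m) :=
  (((hLu.D _).sub ((hLu.D _).D _)).sub
    (Sm.sum fun k _ => (Sm.vc k).mul (Sm_hEf hLu k m)))
theorem Sm_fE (hLu : Sm Lu) (hU : ∀ p : EE N, IsUnit (gMp Lu p)) (l : Fin N) : Sm (fE Lu l) :=
  Sm.sum fun m _ => (Sm_GE hLu hU l m).mul (Sm_wE hLu m)
theorem Sm_PE (hLu : Sm Lu) (hU : ∀ p : EE N, IsUnit (gMp Lu p)) {Cu : EE N → ℝ} (hCu : Sm Cu) (i : Fin N) : Sm (PE Lu Cu i) :=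
  Sm.sum fun j _ => (Sm_GE hLu hU i j).mul (hCu.D _)

theorem gG_delta (hU : ∀ p : EE N, IsUnit (gMp Lu p)) (p : EE N) (i j : Fin N) :
    ∑ k, gE Lu i k p * GE Lu k j p = if i = j then (1:ℝ) else 0 := by
  have h := Matrix.mul_nonsing_inv (gMp Lu p)
    ((Matrix.isUnit_iff_isUnit_det _).mp (hU p))
  have := congrFun (congrFun h i) j
  rw [Matrix.mul_apply, Matrix.one_apply] at this
  simpa [gMp, GE] using this

theorem Gg_delta (hU : ∀ p : EE N, IsUnit (gMp Lu p)) (p : EE N) (i j : Fin N) :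
    ∑ k, GE Lu i k p * gE Lu k j p = if i = j then (1:ℝ) else 0 := by
  have h := Matrix.nonsing_inv_mul (gMp Lu p)
    ((Matrix.isUnit_iff_isUnit_det _).mp (hU p))
  have := congrFun (congrFun h i) j
  rw [Matrix.mul_apply, Matrix.one_apply] at this
  simpa [gMp, GE] using this

end Smooth

variable {Lu : EE N → ℝ}


theorem delta_suml (i : Fin N) (X : Fin N → ℝ) :
    ∑ a, (if i = a then (1:ℝ) else 0) * X a = X i := by simp

theorem gE_symm (hLu : Sm Lu) (i j : Fin N) : gE Lu i j = gE Lu j i :=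
  Dd_swap hLu (dirV N i) (dirV N j)

theorem GE_symm (hLu : Sm Lu) (hU : ∀ p : EE N, IsUnit (gMp Lu p)) (p : EE N)
    (i j : Fin N) : GE Lu i j p = GE Lu j i p := by
  have hsymm : Matrix.transpose (gMp Lu p) = gMp Lu p := by
    ext a b
    exact congrFun (gE_symm hLu b a) p
  show (gMp Lu p)⁻¹ i j = (gMp Lu p)⁻¹ j i
  conv_rhs => rw [← hsymm, ← Matrix.transpose_nonsing_inv]
  rfl

theorem DtE_const (p : EE N) (c : ℝ) : DtE Lu (fun _ => c) p = 0 := by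
  unfold DtE
  rw [Dd_const]
  simp [congrFun (Dd_const _ c)]

theorem DtE_mul {F G : EE N → ℝ} (hF : Sm F) (hG : Sm G) (p : EE N) :
    DtE Lu (fun p => F p * G p) p = DtE Lu F p * G p + F p * DtE Lu G p := by
  have e1 : ∀ (w : EE N), Dd w (fun p => F p * G p) p = Dd w F p * G p + F p * Dd w G p :=
    fun w => congrFun (Dd_mul hF hG w) p
  unfold DtE
  rw [e1]
  have e2 : ∀ (d : Fin N → EE N) (c : Fin N → ℝ),
      ∑ k, c k * Dd (d k) (fun p => F p * G p) p
      = (∑ k, c k * Dd (d k) F p) * G p + F p * ∑ k, c k * Dd (d k) G p := by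
    intro d c
    rw [Finset.sum_mul, Finset.mul_sum, ← Finset.sum_add_distrib]
    exact Finset.sum_congr rfl fun k _ => by rw [e1]; ring
  rw [e2 (fun k => dirQ N k) (fun k => p.2.2 k), e2 (fun k => dirV N k) (fun k => fE Lu k p)]
  ring

theorem DtE_sum {ι : Type} {s : Finset ι} {F : ι → EE N → ℝ} (hF : ∀ i ∈ s, Sm (F i))
    (p : EE N) : DtE Lu (fun p => ∑ j ∈ s, F j p) p = ∑ j ∈ s, DtE Lu (F j) p := by
  have e1 : ∀ (w : EE N), Dd w (fun p => ∑ j ∈ s, F j p) p = ∑ j ∈ s, Dd w (F j) p :=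
    fun w => congrFun (Dd_sum hF w) p
  unfold DtE
  rw [e1]
  have e2 : ∀ (d : Fin N → EE N) (c : Fin N → ℝ),
      ∑ k, c k * Dd (d k) (fun p => ∑ j ∈ s, F j p) p
      = ∑ j ∈ s, ∑ k, c k * Dd (d k) (F j) p := by
    intro d c
    rw [Finset.sum_comm]
    exact Finset.sum_congr rfl fun k _ => by rw [e1, Finset.mul_sum]
  rw [e2 (fun k => dirQ N k) (fun k => p.2.2 k), e2 (fun k => dirV N k) (fun k => fE Lu k p),
    ← Finset.sum_add_distrib, ← Finset.sum_add_distrib]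

/-- `𝒟_t` of the inverse metric. -/
theorem DtE_GE (hLu : Sm Lu) (hU : ∀ p : EE N, IsUnit (gMp Lu p)) (p : EE N) (i j : Fin N) :
    DtE Lu (GE Lu i j) p = -∑ a, ∑ b, GE Lu i a p * DtE Lu (gE Lu a b) p * GE Lu b j p := by
  have hder : ∀ a, ∑ k, (DtE Lu (gE Lu a k) p * GE Lu k j p
      + gE Lu a k p * DtE Lu (GE Lu k j) p) = 0 := by
    intro a
    have h0 : (fun p => ∑ k, gE Lu a k p * GE Lu k j p)
        = fun _ => if a = j then (1:ℝ) else 0 := funext fun p => gG_delta hU p a j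
    have h1 : DtE Lu (fun p => ∑ k, gE Lu a k p * GE Lu k j p) p = 0 := by
      rw [h0]; exact DtE_const p _
    rw [DtE_sum (fun k _ => (Sm_gE hLu a k).mul (Sm_GE hLu hU k j)) p] at h1
    rw [← h1]
    exact Finset.sum_congr rfl fun k _ => (DtE_mul (Sm_gE hLu a k) (Sm_GE hLu hU k j) p).symm
  have hsolve : ∀ a, ∑ k, gE Lu a k p * DtE Lu (GE Lu k j) p
      = -∑ k, DtE Lu (gE Lu a k) p * GE Lu k j p := by
    intro a
    have := hder a
    rw [Finset.sum_add_distrib] at this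
    linarith
  calc DtE Lu (GE Lu i j) p
      = ∑ a, (if i = a then (1:ℝ) else 0) * DtE Lu (GE Lu a j) p := by
        rw [delta_suml i (fun a => DtE Lu (GE Lu a j) p)]
    _ = ∑ a, ∑ k, GE Lu i k p * (gE Lu k a p * DtE Lu (GE Lu a j) p) := by
        refine Finset.sum_congr rfl fun a _ => ?_
        rw [← Gg_delta hU p i a, Finset.sum_mul]
        exact Finset.sum_congr rfl fun k _ => by ring
    _ = ∑ k, GE Lu i k p * ∑ a, gE Lu k a p * DtE Lu (GE Lu a j) p := by
        rw [Finset.sum_comm]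
        exact Finset.sum_congr rfl fun k _ => by rw [Finset.mul_sum]
    _ = ∑ k, GE Lu i k p * -∑ a, DtE Lu (gE Lu k a) p * GE Lu a j p := by
        exact Finset.sum_congr rfl fun k _ => by rw [hsolve k]
    _ = -∑ a, ∑ b, GE Lu i a p * DtE Lu (gE Lu a b) p * GE Lu b j p := by
        rw [← Finset.sum_neg_distrib]
        refine Finset.sum_congr rfl fun k _ => ?_
        rw [mul_neg, Finset.mul_sum, neg_inj]
        exact Finset.sum_congr rfl fun a _ => by ring

theorem single_collapse (j : Fin N) (X : Fin N → ℝ) :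
    ∑ k, (Pi.single j (1:ℝ) : Fin N → ℝ) k * X k = X j := by
  simp [Pi.single_apply]

/-- expansion of a `∂_v`-derivative of a `𝒟_t`-type expression -/
theorem Dv_DtE (hLu : Sm Lu) (hU : ∀ p : EE N, IsUnit (gMp Lu p)) {Cu : EE N → ℝ}
    (hCu : Sm Cu) (j : Fin N) (p : EE N) :
    Dd (dirV N j) (DtE Lu Cu) p
      = DtE Lu (Dd (dirV N j) Cu) p + Dd (dirQ N j) Cu p
        + ∑ k, Dd (dirV N j) (fE Lu k) p * Dd (dirV N k) Cu p := by
  set vj := dirV N j with hvj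
  have SmA : Sm (Dd (dirT N) Cu) := hCu.D _
  have SmB : Sm (fun p : EE N => ∑ k, p.2.2 k * Dd (dirQ N k) Cu p) :=
    Sm.sum fun k _ => (Sm.vc k).mul (hCu.D _)
  have SmC : Sm (fun p : EE N => ∑ k, fE Lu k p * Dd (dirV N k) Cu p) :=
    Sm.sum fun k _ => (Sm_fE hLu hU k).mul (hCu.D _)
  have h2 : Dd vj (DtE Lu Cu) p
      = Dd vj (fun p => Dd (dirT N) Cu p + ∑ k, p.2.2 k * Dd (dirQ N k) Cu p) p
        + Dd vj (fun p : EE N => ∑ k, fE Lu k p * Dd (dirV N k) Cu p) p :=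
    congrFun (Dd_add (SmA.add SmB) SmC vj) p
  have h3 : Dd vj (fun p => Dd (dirT N) Cu p + ∑ k, p.2.2 k * Dd (dirQ N k) Cu p) p
      = Dd vj (Dd (dirT N) Cu) p
        + Dd vj (fun p : EE N => ∑ k, p.2.2 k * Dd (dirQ N k) Cu p) p :=
    congrFun (Dd_add SmA SmB vj) p
  have h4 : Dd vj (fun p : EE N => ∑ k, p.2.2 k * Dd (dirQ N k) Cu p) p
      = ∑ k, ((Pi.single j (1:ℝ) : Fin N → ℝ) k * Dd (dirQ N k) Cu p
          + p.2.2 k * Dd vj (Dd (dirQ N k) Cu) p) := by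
    rw [congrFun (Dd_sum (fun k _ => (Sm.vc k).mul (hCu.D (dirQ N k))) vj) p]
    refine Finset.sum_congr rfl fun k _ => ?_
    rw [congrFun (Dd_mul (Sm.vc k) (hCu.D (dirQ N k)) vj) p,
      congrFun (Dd_vc vj k) p]
    rfl
  have h5 : Dd vj (fun p : EE N => ∑ k, fE Lu k p * Dd (dirV N k) Cu p) p
      = ∑ k, (Dd vj (fE Lu k) p * Dd (dirV N k) Cu p
          + fE Lu k p * Dd vj (Dd (dirV N k) Cu) p) := by
    rw [congrFun (Dd_sum (fun k _ => (Sm_fE hLu hU k).mul (hCu.D (dirV N k))) vj) p]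
    exact Finset.sum_congr rfl fun k _ =>
      congrFun (Dd_mul (Sm_fE hLu hU k) (hCu.D (dirV N k)) vj) p
  rw [h2, h3, h4, h5, Finset.sum_add_distrib, Finset.sum_add_distrib,
    single_collapse j (fun k => Dd (dirQ N k) Cu p)]
  have hsw : ∀ w : EE N, Dd vj (Dd w Cu) = Dd w (Dd vj Cu) := fun w => Dd_swap hCu vj w
  rw [hsw (dirT N)]
  have hswq : ∑ k, p.2.2 k * Dd vj (Dd (dirQ N k) Cu) p
      = ∑ k, p.2.2 k * Dd (dirQ N k) (Dd vj Cu) p :=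
    Finset.sum_congr rfl fun k _ => by rw [hsw (dirQ N k)]
  have hswv : ∑ k, fE Lu k p * Dd vj (Dd (dirV N k) Cu) p
      = ∑ k, fE Lu k p * Dd (dirV N k) (Dd vj Cu) p :=
    Finset.sum_congr rfl fun k _ => by rw [hsw (dirV N k)]
  rw [hswq, hswv]
  unfold DtE
  ring

/-- the derivative of a conserved quantity satisfies the adjoint equation -/
theorem DtE_Dv_conserved (hLu : Sm Lu) (hU : ∀ p : EE N, IsUnit (gMp Lu p)) {Cu : EE N → ℝ}
    (hCu : Sm Cu) (hC : ∀ p, DtE Lu Cu p = 0) (j : Fin N) (p : EE N) :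
    DtE Lu (Dd (dirV N j) Cu) p
      = -Dd (dirQ N j) Cu p - ∑ k, Dd (dirV N j) (fE Lu k) p * Dd (dirV N k) Cu p := by
  have h0 : DtE Lu Cu = fun _ => (0:ℝ) := funext hC
  have h1 : Dd (dirV N j) (DtE Lu Cu) p = 0 := by rw [h0, Dd_const]
  have := Dv_DtE hLu hU hCu j p
  rw [h1] at this
  linarith

theorem gf_eq (hU : ∀ p : EE N, IsUnit (gMp Lu p)) (p : EE N) (m : Fin N) :
    ∑ l, gE Lu m l p * fE Lu l p = wE Lu m p := by
  unfold fE
  calc ∑ l, gE Lu m l p * ∑ a, GE Lu l a p * wE Lu a p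
      = ∑ l, ∑ a, gE Lu m l p * GE Lu l a p * wE Lu a p := by
        refine Finset.sum_congr rfl fun l _ => ?_
        rw [Finset.mul_sum]
        exact Finset.sum_congr rfl fun a _ => by ring
    _ = ∑ a, (∑ l, gE Lu m l p * GE Lu l a p) * wE Lu a p := by
        rw [Finset.sum_comm]
        exact Finset.sum_congr rfl fun a _ => by rw [Finset.sum_mul]
    _ = ∑ a, (if m = a then (1:ℝ) else 0) * wE Lu a p :=
        Finset.sum_congr rfl fun a _ => by rw [gG_delta hU p m a]
    _ = wE Lu m p := delta_suml m _

theorem Dv_gE_symm (hLu : Sm Lu) (j m l : Fin N) :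
    Dd (dirV N j) (gE Lu m l) = Dd (dirV N l) (gE Lu j m) := by
  unfold gE
  rw [Dd_swap hLu (dirV N m) (dirV N l)]
  rw [Dd_swap (hLu.D (dirV N m)) (dirV N j) (dirV N l)]

/-- derivative of `w` -/
theorem Dv_wE (hLu : Sm Lu) (j m : Fin N) (p : EE N) :
    Dd (dirV N j) (wE Lu m) p
      = hEf Lu m j p - hEf Lu j m p - DtE Lu (gE Lu j m) p
        + ∑ l, fE Lu l p * Dd (dirV N l) (gE Lu j m) p := by
  set vj := dirV N j with hvj
  have SmA : Sm (fun p => Dd (dirQ N m) Lu p - Dd (dirT N) (Dd (dirV N m) Lu) p) :=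
    (hLu.D _).sub ((hLu.D _).D _)
  have SmB : Sm (fun p : EE N => ∑ k, p.2.2 k * hEf Lu k m p) :=
    Sm.sum fun k _ => (Sm.vc k).mul (Sm_hEf hLu k m)
  have h1 : Dd vj (wE Lu m) p
      = Dd vj (fun p => Dd (dirQ N m) Lu p - Dd (dirT N) (Dd (dirV N m) Lu) p) p
        - Dd vj (fun p : EE N => ∑ k, p.2.2 k * hEf Lu k m p) p :=
    congrFun (Dd_sub SmA SmB vj) p
  have h2 : Dd vj (fun p => Dd (dirQ N m) Lu p - Dd (dirT N) (Dd (dirV N m) Lu) p) p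
      = Dd vj (Dd (dirQ N m) Lu) p - Dd vj (Dd (dirT N) (Dd (dirV N m) Lu)) p :=
    congrFun (Dd_sub (hLu.D _) ((hLu.D _).D _) vj) p
  have h3 : Dd vj (fun p : EE N => ∑ k, p.2.2 k * hEf Lu k m p) p
      = hEf Lu j m p + ∑ k, p.2.2 k * Dd vj (hEf Lu k m) p := by
    rw [congrFun (Dd_sum (fun k _ => (Sm.vc k).mul (Sm_hEf hLu k m)) vj) p]
    have : ∀ k, Dd vj (fun p : EE N => p.2.2 k * hEf Lu k m p) p
        = (Pi.single j (1:ℝ) : Fin N → ℝ) k * hEf Lu k m p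
          + p.2.2 k * Dd vj (hEf Lu k m) p := by
      intro k
      rw [congrFun (Dd_mul (Sm.vc k) (Sm_hEf hLu k m) vj) p, congrFun (Dd_vc vj k) p]
      rfl
    rw [Finset.sum_congr rfl fun k _ => this k, Finset.sum_add_distrib,
      single_collapse j (fun k => hEf Lu k m p)]
  have hswq : Dd vj (Dd (dirQ N m) Lu) = hEf Lu m j := Dd_swap hLu vj (dirQ N m)
  have hswt : Dd vj (Dd (dirT N) (Dd (dirV N m) Lu)) = Dd (dirT N) (gE Lu j m) :=
    Dd_swap (hLu.D _) vj (dirT N)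
  have hswk : ∀ k, Dd vj (hEf Lu k m) = Dd (dirQ N k) (gE Lu j m) := fun k =>
    Dd_swap (hLu.D _) vj (dirQ N k)
  rw [h1, h2, h3, hswq, hswt]
  rw [Finset.sum_congr rfl fun k _ => by rw [hswk k]]
  unfold DtE
  ring

/-- the key identity : `g ∂_v f = h - hᵀ - 𝒟_t g` -/
theorem g_Dv_fE (hLu : Sm Lu) (hU : ∀ p : EE N, IsUnit (gMp Lu p)) (p : EE N) (j m : Fin N) :
    ∑ l, gE Lu m l p * Dd (dirV N j) (fE Lu l) p
      = hEf Lu m j p - hEf Lu j m p - DtE Lu (gE Lu j m) p := by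
  set vj := dirV N j with hvj
  have hfun : (fun p => ∑ l, gE Lu m l p * fE Lu l p) = wE Lu m :=
    funext fun p => gf_eq hU p m
  have h1 : Dd vj (fun p => ∑ l, gE Lu m l p * fE Lu l p) p = Dd vj (wE Lu m) p := by
    rw [hfun]
  rw [congrFun (Dd_sum (fun l _ => (Sm_gE hLu m l).mul (Sm_fE hLu hU l)) vj) p] at h1
  rw [Finset.sum_congr rfl fun l _ =>
    congrFun (Dd_mul (Sm_gE hLu m l) (Sm_fE hLu hU l) vj) p] at h1
  rw [Finset.sum_add_distrib] at h1
  have hthird : ∑ l, Dd vj (gE Lu m l) p * fE Lu l p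
      = ∑ l, fE Lu l p * Dd (dirV N l) (gE Lu j m) p :=
    Finset.sum_congr rfl fun l _ => by rw [Dv_gE_symm hLu j m l]; ring
  rw [hthird, Dv_wE hLu j m p] at h1
  linarith

/-- solved form of the key identity -/
theorem Dv_fE (hLu : Sm Lu) (hU : ∀ p : EE N, IsUnit (gMp Lu p)) (p : EE N) (j l : Fin N) :
    Dd (dirV N j) (fE Lu l) p
      = ∑ m, GE Lu l m p * (hEf Lu m j p - hEf Lu j m p - DtE Lu (gE Lu j m) p) := by
  calc Dd (dirV N j) (fE Lu l) p
      = ∑ a, (if l = a then (1:ℝ) else 0) * Dd (dirV N j) (fE Lu a) p := by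
        rw [delta_suml l (fun a => Dd (dirV N j) (fE Lu a) p)]
    _ = ∑ a, ∑ m, GE Lu l m p * (gE Lu m a p * Dd (dirV N j) (fE Lu a) p) := by
        refine Finset.sum_congr rfl fun a _ => ?_
        rw [← Gg_delta hU p l a, Finset.sum_mul]
        exact Finset.sum_congr rfl fun m _ => by ring
    _ = ∑ m, GE Lu l m p * ∑ a, gE Lu m a p * Dd (dirV N j) (fE Lu a) p := by
        rw [Finset.sum_comm]
        exact Finset.sum_congr rfl fun m _ => by rw [Finset.mul_sum]
    _ = ∑ m, GE Lu l m p * (hEf Lu m j p - hEf Lu j m p - DtE Lu (gE Lu j m) p) :=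
        Finset.sum_congr rfl fun m _ => by rw [g_Dv_fE hLu hU p j m]

set_option maxHeartbeats 1000000 in
theorem algebra_main
    (G H D : Fin N → Fin N → ℝ) (q1 v1 q2 v2 : Fin N → ℝ)
    (hG : ∀ i j, G i j = G j i) (hD : ∀ i j, D i j = D j i) :
    ((∑ i, (∑ j, G i j * v1 j) * q2 i)
     + ∑ i, (∑ j, ((-∑ a, ∑ b, G i a * D a b * G b j) * v1 j
          + G i j * (-q1 j - ∑ k, (∑ m, G k m * (H m j - H j m - D j m)) * v1 k)))
         * v2 i)
    = (∑ i, ∑ j, G i j * (q2 i * v1 j - q1 i * v2 j))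
      + ∑ i, ∑ j, (∑ k, ∑ l, G i k * G j l * (H k l - H l k)) * v2 i * v1 j := by
  simp only [Finset.mul_sum, Finset.sum_mul, mul_sub, sub_mul, mul_neg, neg_mul,
    mul_add, add_mul, Finset.sum_add_distrib, Finset.sum_sub_distrib,
    Finset.sum_neg_distrib, sub_eq_add_neg, neg_add, neg_neg, mul_assoc]
  have hL1 : ∑ i : Fin N, ∑ j : Fin N, G i j * (v1 j * q2 i)
      = ∑ i : Fin N, ∑ j : Fin N, G i j * (q2 i * v1 j) :=
    Finset.sum_congr rfl fun i _ => Finset.sum_congr rfl fun j _ => by ring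
  have hL3 : ∑ i : Fin N, ∑ j : Fin N, G i j * (q1 j * v2 i)
      = ∑ i : Fin N, ∑ j : Fin N, G i j * (q1 i * v2 j) := by
    rw [Finset.sum_comm]
    exact Finset.sum_congr rfl fun i _ => Finset.sum_congr rfl fun j _ => by rw [hG j i]
  have hL5 : ∑ i : Fin N, ∑ j : Fin N, ∑ k : Fin N, ∑ m : Fin N,
        G i j * (G k m * (H j m * (v1 k * v2 i)))
      = ∑ i : Fin N, ∑ j : Fin N, ∑ k : Fin N, ∑ l : Fin N,
        G i k * (G j l * (H k l * (v2 i * v1 j))) := by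
    refine Finset.sum_congr rfl fun i _ => ?_
    rw [Finset.sum_comm]
    exact Finset.sum_congr rfl fun j _ => Finset.sum_congr rfl fun k _ =>
      Finset.sum_congr rfl fun m _ => by ring
  have hL4 : ∑ i : Fin N, ∑ j : Fin N, ∑ k : Fin N, ∑ m : Fin N,
        G i j * (G k m * (H m j * (v1 k * v2 i)))
      = ∑ i : Fin N, ∑ j : Fin N, ∑ k : Fin N, ∑ l : Fin N,
        G i k * (G j l * (H l k * (v2 i * v1 j))) := by
    refine Finset.sum_congr rfl fun i _ => ?_
    rw [Finset.sum_comm]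
    exact Finset.sum_congr rfl fun j _ => Finset.sum_congr rfl fun k _ =>
      Finset.sum_congr rfl fun m _ => by ring
  have hL26 : ∑ i : Fin N, ∑ j : Fin N, ∑ a : Fin N, ∑ b : Fin N,
        G i a * (D a b * (G b j * (v1 j * v2 i)))
      = ∑ i : Fin N, ∑ j : Fin N, ∑ k : Fin N, ∑ m : Fin N,
        G i j * (G k m * (D j m * (v1 k * v2 i))) := by
    refine Finset.sum_congr rfl fun i _ => ?_
    rw [Finset.sum_comm]
    exact Finset.sum_congr rfl fun a _ => Finset.sum_congr rfl fun j _ =>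
      Finset.sum_congr rfl fun b _ => by rw [hG j b]; ring
  linarith [hL1, hL3, hL5, hL4, hL26]

/-- main E-world identity -/
theorem XactE_eq (hLu : Sm Lu) (hU : ∀ p : EE N, IsUnit (gMp Lu p))
    {C₁u C₂u : EE N → ℝ} (hC1 : Sm C₁u) (hC2 : Sm C₂u)
    (hcons : ∀ p, DtE Lu C₁u p = 0) (p : EE N) :
    ((∑ i, PE Lu C₁u i p * Dd (dirQ N i) C₂u p)
      + ∑ i, DtE Lu (PE Lu C₁u i) p * Dd (dirV N i) C₂u p)
    = (∑ i, ∑ j, GE Lu i j p * (Dd (dirQ N i) C₂u p * Dd (dirV N j) C₁u p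
          - Dd (dirQ N i) C₁u p * Dd (dirV N j) C₂u p))
      + ∑ i, ∑ j, (∑ k, ∑ l, GE Lu i k p * GE Lu j l p * (hEf Lu k l p - hEf Lu l k p))
          * Dd (dirV N i) C₂u p * Dd (dirV N j) C₁u p := by
  have hPE : ∀ i, DtE Lu (PE Lu C₁u i) p
      = ∑ j, ((-∑ a, ∑ b, GE Lu i a p * DtE Lu (gE Lu a b) p * GE Lu b j p)
            * Dd (dirV N j) C₁u p
          + GE Lu i j p * (-Dd (dirQ N j) C₁u p
            - ∑ k, (∑ m, GE Lu k m p
                * (hEf Lu m j p - hEf Lu j m p - DtE Lu (gE Lu j m) p))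
              * Dd (dirV N k) C₁u p)) := by
    intro i
    have h1 : DtE Lu (PE Lu C₁u i) p
        = ∑ j, DtE Lu (fun p => GE Lu i j p * Dd (dirV N j) C₁u p) p := by
      exact DtE_sum (F := fun j => fun p => GE Lu i j p * Dd (dirV N j) C₁u p)
        (fun j _ => (Sm_GE hLu hU i j).mul (hC1.D _)) p
    rw [h1]
    refine Finset.sum_congr rfl fun j _ => ?_
    rw [DtE_mul (Sm_GE hLu hU i j) (hC1.D _) p, DtE_GE hLu hU p i j,
      DtE_Dv_conserved hLu hU hC1 hcons j p]
    have hk : ∑ k, Dd (dirV N j) (fE Lu k) p * Dd (dirV N k) C₁u p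
        = ∑ k, (∑ m, GE Lu k m p
            * (hEf Lu m j p - hEf Lu j m p - DtE Lu (gE Lu j m) p))
          * Dd (dirV N k) C₁u p :=
      Finset.sum_congr rfl fun k _ => by rw [Dv_fE hLu hU p j k]
    rw [hk]
  have hXrw : ∑ i, DtE Lu (PE Lu C₁u i) p * Dd (dirV N i) C₂u p
      = ∑ i, (∑ j, ((-∑ a, ∑ b, GE Lu i a p * DtE Lu (gE Lu a b) p * GE Lu b j p)
            * Dd (dirV N j) C₁u p
          + GE Lu i j p * (-Dd (dirQ N j) C₁u p
            - ∑ k, (∑ m, GE Lu k m p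
                * (hEf Lu m j p - hEf Lu j m p - DtE Lu (gE Lu j m) p))
              * Dd (dirV N k) C₁u p))) * Dd (dirV N i) C₂u p :=
    Finset.sum_congr rfl fun i _ => by rw [hPE i]
  rw [hXrw]
  exact algebra_main (fun i j => GE Lu i j p) (fun i j => hEf Lu i j p)
    (fun i j => DtE Lu (gE Lu i j) p)
    (fun j => Dd (dirQ N j) C₁u p) (fun j => Dd (dirV N j) C₁u p)
    (fun j => Dd (dirQ N j) C₂u p) (fun j => Dd (dirV N j) C₂u p)
    (fun i j => GE_symm hLu hU p i j)
    (fun i j => show DtE Lu (gE Lu i j) p = DtE Lu (gE Lu j i) p by rw [gE_symm hLu i j])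

/-- uncurrying into the `E`-world -/
noncomputable def unc {N : ℕ} (F : Fn N) : EE N → ℝ := fun p => F p.1 p.2.1 p.2.2

section Bridge2

variable {N : ℕ} {L : Fn N}

theorem br_pv (hL : Sm (unc L)) (j : Fin N) (p : EE N) :
    pv j L p.1 p.2.1 p.2.2 = Dd (dirV N j) (unc L) p :=
  pv_bridge (fun _ => rfl) hL j p

theorem br_pq (hL : Sm (unc L)) (j : Fin N) (p : EE N) :
    pq j L p.1 p.2.1 p.2.2 = Dd (dirQ N j) (unc L) p :=
  pq_bridge (fun _ => rfl) hL j p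

theorem br_g (hL : Sm (unc L)) (i j : Fin N) (p : EE N) :
    gmat L p.1 p.2.1 p.2.2 i j = gE (unc L) i j p :=
  pv_bridge (fun p => br_pv hL j p) (hL.D _) i p

theorem br_h (hL : Sm (unc L)) (i j : Fin N) (p : EE N) :
    hmat L p.1 p.2.1 p.2.2 i j = hEf (unc L) i j p :=
  pq_bridge (fun p => br_pv hL j p) (hL.D _) i p

theorem br_ptpv (hL : Sm (unc L)) (j : Fin N) (p : EE N) :
    pt (pv j L) p.1 p.2.1 p.2.2 = Dd (dirT N) (Dd (dirV N j) (unc L)) p :=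
  pt_bridge (fun p => br_pv hL j p) (hL.D _) p

theorem br_gmat (hL : Sm (unc L)) (p : EE N) :
    gmat L p.1 p.2.1 p.2.2 = gMp (unc L) p := by
  ext i j
  exact br_g hL i j p

theorem br_hU (hL : Sm (unc L)) (hg : ∀ t q v, IsUnit (gmat L t q v)) (p : EE N) :
    IsUnit (gMp (unc L) p) := by
  rw [← br_gmat hL p]
  exact hg _ _ _

theorem br_Ginv (hL : Sm (unc L)) (i j : Fin N) (p : EE N) :
    (gmat L p.1 p.2.1 p.2.2)⁻¹ i j = GE (unc L) i j p := by
  rw [br_gmat hL p]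
  rfl

theorem br_f (hL : Sm (unc L)) (l : Fin N) (p : EE N) :
    fvec L l p.1 p.2.1 p.2.2 = fE (unc L) l p := by
  refine Finset.sum_congr rfl fun j _ => ?_
  have hsum : ∑ k, p.2.2 k * pq k (pv j L) p.1 p.2.1 p.2.2
      = ∑ k, p.2.2 k * hEf (unc L) k j p :=
    Finset.sum_congr rfl fun k _ => by
      rw [pq_bridge (fun p => br_pv hL j p) (hL.D _) k p]
      rfl
  rw [br_Ginv hL l j p, br_pq hL j p, br_ptpv hL j p, hsum]
  rfl

theorem br_Dt (hL : Sm (unc L)) {C : Fn N} {Cu : EE N → ℝ}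
    (hb : ∀ p : EE N, C p.1 p.2.1 p.2.2 = Cu p) (hCu : Sm Cu) (p : EE N) :
    Dt L C p.1 p.2.1 p.2.2 = DtE (unc L) Cu p := by
  have h1 : ∑ i, p.2.2 i * pq i C p.1 p.2.1 p.2.2
      = ∑ i, p.2.2 i * Dd (dirQ N i) Cu p :=
    Finset.sum_congr rfl fun i _ => by rw [pq_bridge hb hCu i p]
  have h2 : ∑ i, fvec L i p.1 p.2.1 p.2.2 * pv i C p.1 p.2.1 p.2.2
      = ∑ i, fE (unc L) i p * Dd (dirV N i) Cu p :=
    Finset.sum_congr rfl fun i _ => by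
      rw [br_f hL i p, pv_bridge hb hCu i p]
  show pt C p.1 p.2.1 p.2.2 + _ + _ = _
  rw [pt_bridge hb hCu p, h1, h2]
  rfl

theorem br_P (hL : Sm (unc L)) {C : Fn N} {Cu : EE N → ℝ}
    (hb : ∀ p : EE N, C p.1 p.2.1 p.2.2 = Cu p) (hCu : Sm Cu) (i : Fin N) (p : EE N) :
    Pchar L C i p.1 p.2.1 p.2.2 = PE (unc L) Cu i p :=
  Finset.sum_congr rfl fun j _ => by
    rw [br_Ginv hL i j p, pv_bridge hb hCu j p]

theorem br_Xact (hL : Sm (unc L)) (hg : ∀ t q v, IsUnit (gmat L t q v))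
    {C F : Fn N} {Cu Fu : EE N → ℝ}
    (hbC : ∀ p : EE N, C p.1 p.2.1 p.2.2 = Cu p) (hCu : Sm Cu)
    (hbF : ∀ p : EE N, F p.1 p.2.1 p.2.2 = Fu p) (hFu : Sm Fu) (p : EE N) :
    Xact L C F p.1 p.2.1 p.2.2
      = (∑ i, PE (unc L) Cu i p * Dd (dirQ N i) Fu p)
        + ∑ i, DtE (unc L) (PE (unc L) Cu i) p * Dd (dirV N i) Fu p := by
  have hU : ∀ p : EE N, IsUnit (gMp (unc L) p) := br_hU hL hg
  have h1 : ∑ i, Pchar L C i p.1 p.2.1 p.2.2 * pq i F p.1 p.2.1 p.2.2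
      = ∑ i, PE (unc L) Cu i p * Dd (dirQ N i) Fu p :=
    Finset.sum_congr rfl fun i _ => by
      rw [br_P hL hbC hCu i p, pq_bridge hbF hFu i p]
  have h2 : ∑ i, Dt L (Pchar L C i) p.1 p.2.1 p.2.2 * pv i F p.1 p.2.1 p.2.2
      = ∑ i, DtE (unc L) (PE (unc L) Cu i) p * Dd (dirV N i) Fu p :=
    Finset.sum_congr rfl fun i _ => by
      rw [br_Dt hL (fun p => br_P hL hbC hCu i p) (Sm_PE hL hU hCu i) p,
        pv_bridge hbF hFu i p]
  show (∑ i, Pchar L C i p.1 p.2.1 p.2.2 * pq i F p.1 p.2.1 p.2.2) + _ = _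
  rw [h1, h2]

theorem br_PB (hL : Sm (unc L)) {F₁ F₂ : Fn N} {Fu₁ Fu₂ : EE N → ℝ}
    (hb1 : ∀ p : EE N, F₁ p.1 p.2.1 p.2.2 = Fu₁ p) (h1 : Sm Fu₁)
    (hb2 : ∀ p : EE N, F₂ p.1 p.2.1 p.2.2 = Fu₂ p) (h2 : Sm Fu₂) (p : EE N) :
    PB L F₁ F₂ p.1 p.2.1 p.2.2
      = (∑ i, ∑ j, GE (unc L) i j p * (Dd (dirQ N i) Fu₁ p * Dd (dirV N j) Fu₂ p
            - Dd (dirQ N i) Fu₂ p * Dd (dirV N j) Fu₁ p))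
        + ∑ i, ∑ j, (∑ k, ∑ l, GE (unc L) i k p * GE (unc L) j l p
            * (hEf (unc L) k l p - hEf (unc L) l k p))
          * Dd (dirV N i) Fu₁ p * Dd (dirV N j) Fu₂ p := by
  have e1 : ∑ i, ∑ j, (gmat L p.1 p.2.1 p.2.2)⁻¹ i j
        * (pq i F₁ p.1 p.2.1 p.2.2 * pv j F₂ p.1 p.2.1 p.2.2
          - pq i F₂ p.1 p.2.1 p.2.2 * pv j F₁ p.1 p.2.1 p.2.2)
      = ∑ i, ∑ j, GE (unc L) i j p * (Dd (dirQ N i) Fu₁ p * Dd (dirV N j) Fu₂ p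
          - Dd (dirQ N i) Fu₂ p * Dd (dirV N j) Fu₁ p) :=
    Finset.sum_congr rfl fun i _ => Finset.sum_congr rfl fun j _ => by
      rw [br_Ginv hL i j p, pq_bridge hb1 h1 i p, pv_bridge hb2 h2 j p,
        pq_bridge hb2 h2 i p, pv_bridge hb1 h1 j p]
  have e2 : ∑ i, ∑ j, cmat L p.1 p.2.1 p.2.2 i j
        * pv i F₁ p.1 p.2.1 p.2.2 * pv j F₂ p.1 p.2.1 p.2.2
      = ∑ i, ∑ j, (∑ k, ∑ l, GE (unc L) i k p * GE (unc L) j l p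
            * (hEf (unc L) k l p - hEf (unc L) l k p))
          * Dd (dirV N i) Fu₁ p * Dd (dirV N j) Fu₂ p :=
    Finset.sum_congr rfl fun i _ => Finset.sum_congr rfl fun j _ => by
      have hc : cmat L p.1 p.2.1 p.2.2 i j
          = ∑ k, ∑ l, GE (unc L) i k p * GE (unc L) j l p
            * (hEf (unc L) k l p - hEf (unc L) l k p) := by
        show ∑ k, ∑ l, (gmat L p.1 p.2.1 p.2.2)⁻¹ i k * (gmat L p.1 p.2.1 p.2.2)⁻¹ j l
          * (hmat L p.1 p.2.1 p.2.2 k l - hmat L p.1 p.2.1 p.2.2 l k) = _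
        exact Finset.sum_congr rfl fun k _ => Finset.sum_congr rfl fun l _ => by
          rw [br_Ginv hL i k p, br_Ginv hL j l p, br_h hL k l p, br_h hL l k p]
      rw [hc, pv_bridge hb1 h1 i p, pv_bridge hb2 h2 j p]
  show (∑ i, ∑ j, _) + _ = _
  rw [e1, e2]

theorem cmat_anti (t : ℝ) (q v : Fin N → ℝ) (i j : Fin N) :
    cmat L t q v i j = -cmat L t q v j i := by
  show ∑ k, ∑ l, (gmat L t q v)⁻¹ i k * (gmat L t q v)⁻¹ j l
      * (hmat L t q v k l - hmat L t q v l k) = -cmat L t q v j i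
  calc ∑ k, ∑ l, (gmat L t q v)⁻¹ i k * (gmat L t q v)⁻¹ j l
        * (hmat L t q v k l - hmat L t q v l k)
      = ∑ k, ∑ l, -((gmat L t q v)⁻¹ j l * (gmat L t q v)⁻¹ i k
        * (hmat L t q v l k - hmat L t q v k l)) :=
        Finset.sum_congr rfl fun k _ => Finset.sum_congr rfl fun l _ => by ring
    _ = -∑ k, ∑ l, (gmat L t q v)⁻¹ j l * (gmat L t q v)⁻¹ i k
        * (hmat L t q v l k - hmat L t q v k l) := by
        rw [← Finset.sum_neg_distrib]
        exact Finset.sum_congr rfl fun k _ => by rw [← Finset.sum_neg_distrib]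
    _ = -cmat L t q v j i := by
        rw [Finset.sum_comm]
        rfl

theorem PB_anti (F₁ F₂ : Fn N) (t : ℝ) (q v : Fin N → ℝ) :
    PB L F₁ F₂ t q v = -PB L F₂ F₁ t q v := by
  have e1 : ∑ i, ∑ j, (gmat L t q v)⁻¹ i j
        * (pq i F₁ t q v * pv j F₂ t q v - pq i F₂ t q v * pv j F₁ t q v)
      = -∑ i, ∑ j, (gmat L t q v)⁻¹ i j
        * (pq i F₂ t q v * pv j F₁ t q v - pq i F₁ t q v * pv j F₂ t q v) := by
    rw [← Finset.sum_neg_distrib]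
    refine Finset.sum_congr rfl fun i _ => ?_
    rw [← Finset.sum_neg_distrib]
    exact Finset.sum_congr rfl fun j _ => by ring
  have e2 : ∑ i, ∑ j, cmat L t q v i j * pv i F₁ t q v * pv j F₂ t q v
      = -∑ i, ∑ j, cmat L t q v i j * pv i F₂ t q v * pv j F₁ t q v := by
    calc ∑ i, ∑ j, cmat L t q v i j * pv i F₁ t q v * pv j F₂ t q v
        = ∑ i, ∑ j, -(cmat L t q v j i * pv i F₁ t q v * pv j F₂ t q v) :=
          Finset.sum_congr rfl fun i _ => Finset.sum_congr rfl fun j _ => by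
            rw [cmat_anti t q v i j]; ring
      _ = -∑ i, ∑ j, cmat L t q v j i * pv i F₁ t q v * pv j F₂ t q v := by
          rw [← Finset.sum_neg_distrib]
          exact Finset.sum_congr rfl fun i _ => by rw [← Finset.sum_neg_distrib]
      _ = -∑ i, ∑ j, cmat L t q v i j * pv i F₂ t q v * pv j F₁ t q v := by
          rw [Finset.sum_comm, neg_inj]
          exact Finset.sum_congr rfl fun i _ => Finset.sum_congr rfl fun j _ => by ring
  show (∑ i, ∑ j, _) + _ = _
  rw [e1, e2]
  show _ = -((∑ i, ∑ j, _) + _)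
  ring

end Bridge2

/-- for locally conserved `C₁, C₂`, the symmetry vector fields
satisfy `X^ℰ_{(C₁)}(C₂) = −X^ℰ_{(C₂)}(C₁) = {C₂, C₁}`. -/
theorem symmetry_action_on_conserved_integrals {N : ℕ}
    (L : Fn N) (hL : SmoothFn L)
    (hg : ∀ t q v, IsUnit (gmat L t q v))
    (C₁ C₂ : Fn N) (hC₁ : SmoothFn C₁) (hC₂ : SmoothFn C₂)
    (hDt₁ : ∀ t q v, Dt L C₁ t q v = 0)
    (hDt₂ : ∀ t q v, Dt L C₂ t q v = 0) :
    (∀ t q v, Xact L C₁ C₂ t q v = - Xact L C₂ C₁ t q v) ∧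
    (∀ t q v, Xact L C₁ C₂ t q v = PB L C₂ C₁ t q v) := by
  have hLu : Sm (unc L) := hL
  have hU : ∀ p : EE N, IsUnit (gMp (unc L) p) := br_hU hLu hg
  have hC1u : Sm (unc C₁) := hC₁
  have hC2u : Sm (unc C₂) := hC₂
  have hb1 : ∀ p : EE N, C₁ p.1 p.2.1 p.2.2 = unc C₁ p := fun _ => rfl
  have hb2 : ∀ p : EE N, C₂ p.1 p.2.1 p.2.2 = unc C₂ p := fun _ => rfl
  have hcons1 : ∀ p : EE N, DtE (unc L) (unc C₁) p = 0 := fun p => by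
    rw [← br_Dt hLu hb1 hC1u p]; exact hDt₁ _ _ _
  have hcons2 : ∀ p : EE N, DtE (unc L) (unc C₂) p = 0 := fun p => by
    rw [← br_Dt hLu hb2 hC2u p]; exact hDt₂ _ _ _
  have key12 : ∀ t q v, Xact L C₁ C₂ t q v = PB L C₂ C₁ t q v := by
    intro t q v
    have e1 := br_Xact hLu hg hb1 hC1u hb2 hC2u ((t, q, v) : EE N)
    have e2 := br_PB hLu hb2 hC2u hb1 hC1u ((t, q, v) : EE N)
    have e3 := XactE_eq hLu hU hC1u hC2u hcons1 ((t, q, v) : EE N)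
    exact e1.trans (e3.trans e2.symm)
  have key21 : ∀ t q v, Xact L C₂ C₁ t q v = PB L C₁ C₂ t q v := by
    intro t q v
    have e1 := br_Xact hLu hg hb2 hC2u hb1 hC1u ((t, q, v) : EE N)
    have e2 := br_PB hLu hb1 hC1u hb2 hC2u ((t, q, v) : EE N)
    have e3 := XactE_eq hLu hU hC2u hC1u hcons2 ((t, q, v) : EE N)
    exact e1.trans (e3.trans e2.symm)
  refine ⟨fun t q v => ?_, key12⟩
  rw [key12 t q v, key21 t q v]
  exact PB_anti C₂ C₁ t q v
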